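/- For every n ≥ 1, the sum over all Dyck paths α of length 2n of the product of the heights of the down steps of α equals 1·3·5···(2n-1), the product of the first n odd numbers. -/

import Mathlib

/-!
Let `S k m` be the sum, over the paths of length `k` from height `0` to height `m` that stay
weakly above the axis, of the product of the heights of their down steps. Splitting off the last
step gives `S (k + 1) m = S k (m - 1) + (m + 1) * S k (m + 1)`, because a final down step has
height `m + 1`. The number `C(k, m) * (k - m - 1)!!` of partial matchings of `k` points leaving
`m` of them unmatched obeys the same recursion, so the two agree; for `k = 2n`, `m = 0` this is
`(2n - 1)!! = 1 * 3 * ⋯ * (2n - 1)`.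
-/

open Finset

/-- `D ⊆ {1,…,L}` is the set of down steps of a Dyck path of length `L`:
it has `L/2` elements and every prefix has at least as many up steps as down steps. -/
def IsDyck (L : ℕ) (D : Finset ℕ) : Prop :=
  D ⊆ Finset.Icc 1 L ∧ 2 * D.card = L ∧ ∀ k ≤ L, 2 * (D.filter (· ≤ k)).card ≤ k

instance (L : ℕ) : DecidablePred (IsDyck L) := fun D => by
  unfold IsDyck; infer_instance

/-- The collection of all Dyck paths (encoded by their down-step sets) of length `L`. -/
def dyckPaths (L : ℕ) : Finset (Finset ℕ) :=
  (Finset.Icc 1 L).powerset.filter (IsDyck L)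

/-- The position (in `{1,…,L}`) of the `i`-th down step (`1`-indexed). -/
def dstep (D : Finset ℕ) (i : ℕ) : ℕ := (D.sort (· ≤ ·)).getD (i - 1) 0

/-- The height `h_i` of the `i`-th down step of a Dyck path:  the step goes from
`(d_i - 1, h_i)` to `(d_i, h_i - 1)`; equivalently `h_i = d_i + 1 - 2 i`. -/
def ht (D : Finset ℕ) (i : ℕ) : ℕ := dstep D i + 1 - 2 * i

/-- The modified height `h_i^*`: equal to `h_i - 1` if there is no up step to the right of
the `i`-th down step, and to `h_i` otherwise. -/
def hstar (L : ℕ) (D : Finset ℕ) (i : ℕ) : ℕ :=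
  if Finset.Ioc (dstep D i) L ⊆ D then ht D i - 1 else ht D i

/-- `crossout w k` is the pair (positions marked A, positions marked B) after `k` rounds of
the crossout procedure: in each round, first mark B at the unmarked position with the smallest
value `w i`, then mark A at the leftmost unmarked position. -/
def crossout {N : ℕ} (w : Equiv.Perm (Fin N)) : ℕ → Finset (Fin N) × Finset (Fin N)
  | 0 => (∅, ∅)
  | k + 1 =>
    let p := crossout w k
    let u := (Finset.univ : Finset (Fin N)) \ (p.1 ∪ p.2)
    if hu : u.Nonempty then
      let b := w.symm ((u.image w).min' (hu.image _))
      if ha : (u.erase b).Nonempty then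
        (insert ((u.erase b).min' ha) p.1, insert b p.2)
      else (p.1, insert b p.2)
    else p

/-- The set of positions marked A under the crossout procedure. -/
def markA {N : ℕ} (w : Equiv.Perm (Fin N)) : Finset (Fin N) := (crossout w N).1

/-- The set of positions marked B under the crossout procedure. -/
def markB {N : ℕ} (w : Equiv.Perm (Fin N)) : Finset (Fin N) := (crossout w N).2

/-- Down-step set of Alice's path `p_A(w)`:  the values (in `{1,…,N}`) at positions marked A. -/
def pAset {N : ℕ} (w : Equiv.Perm (Fin N)) : Finset ℕ :=
  (markA w).image (fun a => Fin.val (w a) + 1)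

/-- Down-step set of Bob's path `p_B(w)`:  `{b + 1 : b marked B} ∪ {N + 2}`
(positions taken in `{1,…,N}`, so `b + 1` becomes `(b : ℕ) + 2`). -/
def pBset {N : ℕ} (w : Equiv.Perm (Fin N)) : Finset ℕ :=
  insert (N + 2) ((markB w).image (fun b => Fin.val b + 2))

/-- Number of AA inversions of `w`. -/
def aaInv {N : ℕ} (w : Equiv.Perm (Fin N)) : ℕ :=
  (Finset.univ.filter (fun p : Fin N × Fin N =>
    p.1 < p.2 ∧ w p.2 < w p.1 ∧ p.1 ∈ markA w ∧ p.2 ∈ markA w)).card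

/-- Number of BB inversions of `w`. -/
def bbInv {N : ℕ} (w : Equiv.Perm (Fin N)) : ℕ :=
  (Finset.univ.filter (fun p : Fin N × Fin N =>
    p.1 < p.2 ∧ w p.2 < w p.1 ∧ p.1 ∈ markB w ∧ p.2 ∈ markB w)).card

/-- Number of AB inversions of `w`. -/
def abInv {N : ℕ} (w : Equiv.Perm (Fin N)) : ℕ :=
  (Finset.univ.filter (fun p : Fin N × Fin N =>
    p.1 < p.2 ∧ w p.2 < w p.1 ∧ p.1 ∈ markA w ∧ p.2 ∈ markB w)).card

/-- Total number of inversions of `w`. -/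
def invW {N : ℕ} (w : Equiv.Perm (Fin N)) : ℕ :=
  (Finset.univ.filter (fun p : Fin N × Fin N => p.1 < p.2 ∧ w p.2 < w p.1)).card

/-- The statistic `z(w) = #{i < j : w i < w j and i is marked B}`. -/
def zstat {N : ℕ} (w : Equiv.Perm (Fin N)) : ℕ :=
  (Finset.univ.filter (fun p : Fin N × Fin N =>
    p.1 < p.2 ∧ w p.1 < w p.2 ∧ p.1 ∈ markB w)).card

/-- Label carried by the down step of `p_A` corresponding to the A-position `a`:
one plus the number of A-positions to the left of `a` with larger value. -/
def labelA {N : ℕ} (w : Equiv.Perm (Fin N)) (a : Fin N) : ℕ :=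
  1 + ((markA w).filter (fun a' => a' < a ∧ w a < w a')).card

/-- The label sequence `ℓ` of `p_A(w)`: `ellSeq w r` is the label on the `r`-th down step. -/
def ellSeq {N : ℕ} (w : Equiv.Perm (Fin N)) (r : ℕ) : ℕ :=
  ∑ a ∈ (markA w).filter (fun a => Fin.val (w a) + 1 = dstep (pAset w) r), labelA w a

/-- Label carried by the down step of `p_B` corresponding to the B-position `b`:
one plus the number of B-positions to the right of `b` with smaller value. -/
def labelB {N : ℕ} (w : Equiv.Perm (Fin N)) (b : Fin N) : ℕ :=
  1 + ((markB w).filter (fun b' => w b' < w b ∧ b < b')).card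

/-- The label sequence `m` of `p_B(w)`: `emSeq w r` is the label on the `r`-th down step. -/
def emSeq {N : ℕ} (w : Equiv.Perm (Fin N)) (r : ℕ) : ℕ :=
  ∑ b ∈ (markB w).filter (fun b => Fin.val b + 2 = dstep (pBset w) r), labelB w b

/-- The `q`-integer `[k]_q = 1 + q + ⋯ + q^{k-1}` in `ℤ[q]`. -/
noncomputable def qint (k : ℕ) : Polynomial ℤ := ∑ j ∈ Finset.range k, Polynomial.X ^ j

/-- The `q`-integer `[k]` in the variable `X v` of the two-variable polynomial ring. -/
noncomputable def qint2 (v : Fin 2) (k : ℕ) : MvPolynomial (Fin 2) ℤ :=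
  ∑ j ∈ Finset.range k, (MvPolynomial.X v) ^ j

/-- `M` is a perfect matching of `{1,…,2n}`: a family of pairwise disjoint 2-element sets
whose union is `{1,…,2n}`. -/
def IsMatching (n : ℕ) (M : Finset (Finset ℕ)) : Prop :=
  (∀ e ∈ M, e.card = 2) ∧ (M : Set (Finset ℕ)).PairwiseDisjoint id ∧
    M.biUnion id = Finset.Icc 1 (2 * n)

theorem Finset.sort_insert_of_forall_lt {α : Type*} [LinearOrder α] {s : Finset α} {a : α}
    (ha : ∀ b ∈ s, b < a) : (insert a s).sort (· ≤ ·) = s.sort (· ≤ ·) ++ [a] := by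
  have hnodup : (s.sort (· ≤ ·) ++ [a]).Nodup := by
    simpa [List.nodup_append] using fun b hb => (ha b hb).ne
  have hins : insert a s = (s.sort (· ≤ ·) ++ [a]).toFinset := by
    ext; simp
  rw [hins, List.toFinset_sort _ hnodup, List.pairwise_append]
  exact ⟨pairwise_sort _ _, List.pairwise_singleton _ _,
    fun b hb c hc => by simpa [List.eq_of_mem_singleton hc] using (ha b ((mem_sort _).1 hb)).le⟩

lemma subset_Icc_of_subset_Icc_succ_of_notMem {D : Finset ℕ} {k : ℕ} (hD : D ⊆ Icc 1 (k + 1))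
    (hk : k + 1 ∉ D) : D ⊆ Icc 1 k := fun x hx => by
  have := hD hx
  have := ne_of_mem_of_not_mem hx hk
  simp only [mem_Icc] at *
  omega

/-- Down-step sets of the lattice paths of length `k` from height `0` to height `m`
that stay weakly above the axis. -/
def dyckPrefixes (k m : ℕ) : Finset (Finset ℕ) :=
  (Icc 1 k).powerset.filter fun D =>
    2 * D.card + m = k ∧ ∀ j ≤ k, 2 * (D.filter (· ≤ j)).card ≤ j

lemma mem_dyckPrefixes {k m : ℕ} {D : Finset ℕ} :
    D ∈ dyckPrefixes k m ↔ D ⊆ Icc 1 k ∧ 2 * D.card + m = k ∧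
      ∀ j ≤ k, 2 * (D.filter (· ≤ j)).card ≤ j := by
  simp [dyckPrefixes]

lemma dyckPaths_eq_dyckPrefixes (L : ℕ) : dyckPaths L = dyckPrefixes L 0 := by
  ext D
  simp [dyckPaths, dyckPrefixes, IsDyck]

lemma dyckPrefixes_eq_empty_of_lt {k m : ℕ} (h : k < m) : dyckPrefixes k m = ∅ :=
  eq_empty_of_forall_notMem fun _ hD => by have := (mem_dyckPrefixes.1 hD).2.1; omega

lemma dyckPrefixes_zero_zero : dyckPrefixes 0 0 = {∅} := by
  ext D
  simp +contextual [mem_dyckPrefixes]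

lemma insert_mem_dyckPrefixes_succ {k m : ℕ} {D : Finset ℕ}
    (hD : D ∈ dyckPrefixes k (m + 1)) : insert (k + 1) D ∈ dyckPrefixes (k + 1) m := by
  obtain ⟨hsub, hcard, hpre⟩ := mem_dyckPrefixes.1 hD
  have hk : k + 1 ∉ D := fun h => by simpa using hsub h
  refine mem_dyckPrefixes.2
    ⟨insert_subset (by simp) (hsub.trans (Icc_subset_Icc_right (by omega))),
      by rw [card_insert_of_notMem hk]; omega, fun j hj => ?_⟩
  by_cases hjk : j ≤ k
  · rw [filter_insert, if_neg (by omega)]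
    exact hpre j hjk
  · have := card_filter_le (insert (k + 1) D) (· ≤ j)
    rw [card_insert_of_notMem hk] at this
    omega

lemma erase_mem_dyckPrefixes_of_mem {k m : ℕ} {D : Finset ℕ} (hD : D ∈ dyckPrefixes (k + 1) m)
    (hk : k + 1 ∈ D) : D.erase (k + 1) ∈ dyckPrefixes k (m + 1) := by
  obtain ⟨hsub, hcard, hpre⟩ := mem_dyckPrefixes.1 hD
  have hpos := card_pos.2 ⟨_, hk⟩
  refine mem_dyckPrefixes.2 ⟨subset_Icc_of_subset_Icc_succ_of_notMem
    ((erase_subset _ _).trans hsub) (notMem_erase _ _), by rw [card_erase_of_mem hk]; omega,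
    fun j hj => ?_⟩
  rw [filter_erase, erase_eq_of_notMem fun h => by have := (mem_filter.1 h).2; omega]
  exact hpre j (by omega)

lemma filter_mem_dyckPrefixes_succ (k m : ℕ) :
    (dyckPrefixes (k + 1) m).filter (k + 1 ∈ ·) =
      (dyckPrefixes k (m + 1)).image (insert (k + 1)) := by
  ext D
  simp only [mem_filter, mem_image]
  constructor
  · rintro ⟨hD, hk⟩
    exact ⟨_, erase_mem_dyckPrefixes_of_mem hD hk, insert_erase hk⟩
  · rintro ⟨D, hD, rfl⟩
    exact ⟨insert_mem_dyckPrefixes_succ hD, mem_insert_self _ _⟩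

lemma filter_notMem_dyckPrefixes_succ_succ (k m : ℕ) :
    (dyckPrefixes (k + 1) (m + 1)).filter (k + 1 ∉ ·) = dyckPrefixes k m := by
  ext D
  simp only [mem_filter, mem_dyckPrefixes]
  constructor
  · rintro ⟨⟨hsub, hcard, hpre⟩, hk⟩
    exact ⟨subset_Icc_of_subset_Icc_succ_of_notMem hsub hk, by omega,
      fun j hj => hpre j (by omega)⟩
  · rintro ⟨hsub, hcard, hpre⟩
    refine ⟨⟨hsub.trans (Icc_subset_Icc_right (by omega)), by omega, fun j hj => ?_⟩,
      fun h => by simpa using hsub h⟩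
    by_cases hjk : j ≤ k
    · exact hpre j hjk
    · have := card_filter_le D (· ≤ j)
      omega

lemma filter_notMem_dyckPrefixes_succ_zero (k : ℕ) :
    (dyckPrefixes (k + 1) 0).filter (k + 1 ∉ ·) = ∅ := by
  refine filter_false_of_mem fun D hD hk => ?_
  obtain ⟨hsub, hcard, hpre⟩ := mem_dyckPrefixes.1 hD
  have hsub' := subset_Icc_of_subset_Icc_succ_of_notMem hsub hk
  have hall : D.filter (· ≤ k) = D := filter_true_of_mem fun x hx => (mem_Icc.1 (hsub' hx)).2
  have := hpre k (by omega)
  rw [hall] at this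
  omega

def heightProd (D : Finset ℕ) : ℕ := ∏ i ∈ Icc 1 D.card, ht D i

lemma heightProd_insert_of_forall_lt {D : Finset ℕ} {a : ℕ} (ha : ∀ b ∈ D, b < a) :
    heightProd (insert a D) = (a + 1 - 2 * (D.card + 1)) * heightProd D := by
  have hsort := sort_insert_of_forall_lt ha
  have hlen := length_sort (s := D) (· ≤ ·)
  have hlast : ht (insert a D) (D.card + 1) = a + 1 - 2 * (D.card + 1) := by
    simp [ht, dstep, hsort, hlen]
  have hinit : ∀ i ∈ Icc 1 D.card, ht (insert a D) i = ht D i := fun i hi => by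
    rw [mem_Icc, ← hlen] at hi
    rw [ht, ht, dstep, dstep, hsort, List.getD_append _ _ _ _ (by omega)]
  rw [heightProd, heightProd, card_insert_of_notMem fun h => (ha a h).false,
    prod_Icc_succ_top (by omega), prod_congr rfl hinit, hlast, mul_comm]

def heightSum (k m : ℕ) : ℕ := ∑ D ∈ dyckPrefixes k m, heightProd D

lemma sum_heightProd_filter_mem_dyckPrefixes_succ (k m : ℕ) :
    ∑ D ∈ (dyckPrefixes (k + 1) m).filter (k + 1 ∈ ·), heightProd D =
      (m + 1) * heightSum k (m + 1) := by
  have hlt : ∀ D ∈ dyckPrefixes k (m + 1), ∀ b ∈ D, b < k + 1 := fun D hD b hb =>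
    Nat.lt_succ_of_le (mem_Icc.1 ((mem_dyckPrefixes.1 hD).1 hb)).2
  have hinj : Set.InjOn (insert (k + 1)) (dyckPrefixes k (m + 1) : Set (Finset ℕ)) := by
    intro D hD D' hD' h
    rw [← erase_insert fun hk => (hlt D hD _ hk).false,
      ← erase_insert fun hk => (hlt D' hD' _ hk).false, h]
  rw [filter_mem_dyckPrefixes_succ, sum_image hinj, heightSum, mul_sum]
  refine sum_congr rfl fun D hD => ?_
  have hcard := (mem_dyckPrefixes.1 hD).2.1
  rw [heightProd_insert_of_forall_lt (hlt D hD)]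
  congr 1
  omega

lemma heightSum_succ_zero (k : ℕ) : heightSum (k + 1) 0 = heightSum k 1 := by
  rw [heightSum, ← sum_filter_add_sum_filter_not _ (k + 1 ∈ ·),
    sum_heightProd_filter_mem_dyckPrefixes_succ, filter_notMem_dyckPrefixes_succ_zero,
    sum_empty, add_zero, zero_add, one_mul]

lemma heightSum_succ_succ (k m : ℕ) :
    heightSum (k + 1) (m + 1) = heightSum k m + (m + 2) * heightSum k (m + 2) := by
  rw [heightSum, ← sum_filter_add_sum_filter_not _ (k + 1 ∈ ·),
    sum_heightProd_filter_mem_dyckPrefixes_succ, filter_notMem_dyckPrefixes_succ_succ,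
    ← heightSum, add_comm]

lemma heightSum_eq_choose_mul_prod {k m j : ℕ} (h : m + 2 * j = k) :
    heightSum k m = k.choose m * ∏ i ∈ range j, (2 * i + 1) := by
  induction k generalizing m j with
  | zero =>
    obtain ⟨rfl, rfl⟩ : m = 0 ∧ j = 0 := by omega
    simp [heightSum, dyckPrefixes_zero_zero, heightProd]
  | succ k ih =>
    cases m with
    | zero =>
      obtain ⟨j, rfl⟩ : ∃ j', j = j' + 1 := ⟨j - 1, by omega⟩
      rw [heightSum_succ_zero, ih (m := 1) (j := j) (by omega), prod_range_succ,
        Nat.choose_one_right, Nat.choose_zero_right]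
      rw [show k = 2 * j + 1 by omega]
      ring
    | succ m =>
      rw [heightSum_succ_succ, ih (m := m) (j := j) (by omega), Nat.choose_succ_succ']
      cases j with
      | zero =>
        obtain rfl : k = m := by omega
        rw [heightSum, dyckPrefixes_eq_empty_of_lt (by omega), Nat.choose_succ_self]
        simp
      | succ j =>
        have hchoose : (m + 2) * k.choose (m + 2) = (2 * j + 1) * k.choose (m + 1) := by
          rw [mul_comm, Nat.choose_succ_right_eq, show k - (m + 1) = 2 * j + 1 by omega, mul_comm]
        rw [ih (m := m + 2) (j := j) (by omega), prod_range_succ]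
        linear_combination (∏ i ∈ range j, (2 * i + 1)) * hchoose

theorem stmt1_general (n : ℕ) :
    ∑ α ∈ dyckPaths (2 * n), ∏ i ∈ Finset.Icc 1 n, ht α i =
      ∏ i ∈ Finset.range n, (2 * i + 1) := by
  have hprod : ∀ D ∈ dyckPrefixes (2 * n) 0, ∏ i ∈ Icc 1 n, ht D i = heightProd D :=
    fun D hD => by
      have hcard := (mem_dyckPrefixes.1 hD).2.1
      rw [heightProd, show D.card = n by omega]
  rw [dyckPaths_eq_dyckPrefixes, sum_congr rfl hprod, ← heightSum,
    heightSum_eq_choose_mul_prod (m := 0) (j := n) (by ring), Nat.choose_zero_right, one_mul]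

/-- `∑_{α ∈ D_{2n}} ∏_{i=1}^n h_i(α) = 1·3·5⋯(2n-1)`. -/
theorem stmt1 (n : ℕ) (hn : 1 ≤ n) :
    ∑ α ∈ dyckPaths (2 * n), ∏ i ∈ Finset.Icc 1 n, ht α i =
      ∏ i ∈ Finset.range n, (2 * i + 1) :=
  stmt1_general n
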